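/- Let n ≥ 1, let γ ∈ ℝ with γ ≠ 1, let ρ, μ : ℝⁿ → ℝ be smooth with ρ(x) > 0 and μ(x) > 0 for all x, and let Φ : ℝⁿ → ℝ be smooth. Then for every x ∈ ℝⁿ: μ(x)^{γ−1}·ρ(x)^{−γ}·∇·(ρ^γ ∇Φ)(x) − γ·ρ(x)^{γ−1}·⟨ ∇( (1/(1−γ))·(ρ/μ)^{1−γ} )(x), ∇Φ(x) ⟩ = μ(x)^{γ−1}·ΔΦ(x) + γ·μ(x)^{γ−2}·⟨∇μ(x), ∇Φ(x)⟩. -/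

import Mathlib

/-!
By the product rule, `∇·(ρ^γ ∇Φ) = γ ρ^{γ-1} ⟨∇ρ, ∇Φ⟩ + ρ^γ ΔΦ`, and by the chain rule,
writing `(ρ/μ)^{1-γ} = ρ^{1-γ} μ^{γ-1}`, the gradient of the first variation is
`ρ^{-γ} μ^{γ-1} ∇ρ - ρ^{1-γ} μ^{γ-2} ∇μ`. After multiplying by the prefactors, both
`⟨∇ρ, ∇Φ⟩` terms become `γ ρ^{-1} μ^{γ-1} ⟨∇ρ, ∇Φ⟩` and cancel, so every dependence on `ρ` drops out.
-/

open MeasureTheory Filter Set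
open scoped InnerProductSpace Topology

/-- Partial derivative `∂ⱼ f x` on Euclidean space. -/
noncomputable def pder (n : ℕ) (j : Fin n) (f : EuclideanSpace ℝ (Fin n) → ℝ)
    (x : EuclideanSpace ℝ (Fin n)) : ℝ :=
  fderiv ℝ f x (EuclideanSpace.single j 1)

/-- Divergence `∇·v` of a vector field on Euclidean space. -/
noncomputable def divg (n : ℕ) (v : EuclideanSpace ℝ (Fin n) → EuclideanSpace ℝ (Fin n))
    (x : EuclideanSpace ℝ (Fin n)) : ℝ :=
  ∑ j, pder n j (fun y => v y j) x

/-- Laplacian `Δf = ∑ⱼ ∂ⱼ∂ⱼ f`. -/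
noncomputable def lapl (n : ℕ) (f : EuclideanSpace ℝ (Fin n) → ℝ)
    (x : EuclideanSpace ℝ (Fin n)) : ℝ :=
  ∑ j, pder n j (fun y => pder n j f y) x

/-- Entry `(i,j)` of the Hessian matrix of `f`. -/
noncomputable def hessij (n : ℕ) (f : EuclideanSpace ℝ (Fin n) → ℝ)
    (x : EuclideanSpace ℝ (Fin n)) (i j : Fin n) : ℝ :=
  pder n i (fun y => pder n j f y) x

/-- Hessian quadratic form `Hess f (u,u) = ∑ᵢⱼ (∂ᵢ∂ⱼf) uᵢ uⱼ`. -/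
noncomputable def hessQF (n : ℕ) (f : EuclideanSpace ℝ (Fin n) → ℝ)
    (x u : EuclideanSpace ℝ (Fin n)) : ℝ :=
  ∑ i, ∑ j, hessij n f x i j * u i * u j

/-- Squared Frobenius norm of the Hessian: `‖Hess f‖² = ∑ᵢⱼ (∂ᵢ∂ⱼf)²`. -/
noncomputable def hessFrob (n : ℕ) (f : EuclideanSpace ℝ (Fin n) → ℝ)
    (x : EuclideanSpace ℝ (Fin n)) : ℝ :=
  ∑ i, ∑ j, (hessij n f x i j)^2

section Gradient

variable {F : Type*} [NormedAddCommGroup F] [InnerProductSpace ℝ F] [CompleteSpace F]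
  {f g : F → ℝ} {x : F}

theorem gradient_fun_mul (hf : DifferentiableAt ℝ f x) (hg : DifferentiableAt ℝ g x) :
    gradient (fun y => f y * g y) x = f x • gradient g x + g x • gradient f x := by
  simp only [gradient, fderiv_fun_mul hf hg, map_add, map_smul]

theorem gradient_fun_const_mul (c : ℝ) (hf : DifferentiableAt ℝ f x) :
    gradient (fun y => c * f y) x = c • gradient f x := by
  simp only [gradient, fderiv_const_mul hf, map_smul]

theorem gradient_fun_rpow_const (p : ℝ) (hf : DifferentiableAt ℝ f x) (hx : f x ≠ 0) :
    gradient (fun y => f y ^ p) x = (p * f x ^ (p - 1)) • gradient f x := by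
  simp only [gradient, (hf.hasFDerivAt.rpow_const (Or.inl hx)).fderiv, map_smul]

end Gradient

section Euclidean

variable {n : ℕ} {f g : EuclideanSpace ℝ (Fin n) → ℝ} {x : EuclideanSpace ℝ (Fin n)}

theorem gradient_apply_eq_pder (f : EuclideanSpace ℝ (Fin n) → ℝ) (x : EuclideanSpace ℝ (Fin n))
    (j : Fin n) : gradient f x j = pder n j f x := by
  rw [pder, ← inner_gradient_left, EuclideanSpace.inner_single_right, one_mul, conj_trivial]

theorem inner_gradient_eq_sum_pder (f g : EuclideanSpace ℝ (Fin n) → ℝ)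
    (x : EuclideanSpace ℝ (Fin n)) :
    ⟪gradient f x, gradient g x⟫_ℝ = ∑ j, pder n j f x * pder n j g x := by
  simp only [PiLp.inner_apply, RCLike.inner_apply, conj_trivial, gradient_apply_eq_pder, mul_comm]

theorem pder_fun_mul (j : Fin n) (hf : DifferentiableAt ℝ f x) (hg : DifferentiableAt ℝ g x) :
    pder n j (fun y => f y * g y) x = pder n j f x * g x + f x * pder n j g x := by
  simp only [pder, fderiv_fun_mul hf hg, add_apply, smul_apply, smul_eq_mul]
  ring

theorem ContDiff.differentiable_pder (hf : ContDiff ℝ 2 f) (j : Fin n) :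
    Differentiable ℝ (pder n j f) :=
  ((hf.fderiv_right (m := 1) (by norm_num)).clm_apply contDiff_const).differentiable
    one_ne_zero

theorem divg_smul_gradient (hg : DifferentiableAt ℝ g x) (hf : ContDiff ℝ 2 f) :
    divg n (fun y => g y • gradient f y) x
      = ⟪gradient g x, gradient f x⟫_ℝ + g x * lapl n f x := by
  simp only [divg, lapl, inner_gradient_eq_sum_pder, PiLp.smul_apply, smul_eq_mul,
    gradient_apply_eq_pder, pder_fun_mul _ hg (hf.differentiable_pder _ _),
    Finset.sum_add_distrib, Finset.mul_sum]

end Euclidean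

theorem rpow_first_variation_identity {p m γ : ℝ} (hp : 0 < p) (hm : 0 < m) (hγ : γ ≠ 1)
    (A B L : ℝ) :
    m ^ (γ - 1) * p ^ (-γ) * (γ * p ^ (γ - 1) * A + p ^ γ * L)
      - γ * p ^ (γ - 1) * (1 / (1 - γ) * (p ^ (1 - γ) * ((γ - 1) * m ^ (γ - 1 - 1) * B)
        + m ^ (γ - 1) * ((1 - γ) * p ^ (1 - γ - 1) * A)))
      = m ^ (γ - 1) * L + γ * m ^ (γ - 2) * B := by
  have h1γ : 1 - γ ≠ 0 := sub_ne_zero.mpr hγ.symm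
  have hpγ : p ^ γ ≠ 0 := (Real.rpow_pos_of_pos hp γ).ne'
  have hmγ : m ^ γ ≠ 0 := (Real.rpow_pos_of_pos hm γ).ne'
  simp only [Real.rpow_sub hp, Real.rpow_sub hm, Real.rpow_neg hp.le, Real.rpow_one,
    Real.rpow_two]
  field_simp
  ring

theorem stmt13_general (n : ℕ) (γ : ℝ) (hγ : γ ≠ 1)
    (ρ μ : EuclideanSpace ℝ (Fin n) → ℝ)
    (hρ : ContDiff ℝ (⊤ : ℕ∞) ρ) (hμ : ContDiff ℝ (⊤ : ℕ∞) μ)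
    (hρpos : ∀ x, 0 < ρ x) (hμpos : ∀ x, 0 < μ x)
    (Φ : EuclideanSpace ℝ (Fin n) → ℝ) (hΦ : ContDiff ℝ (⊤ : ℕ∞) Φ) :
    ∀ x, (μ x)^(γ-1) * (ρ x)^(-γ) * divg n (fun y => (ρ y)^γ • gradient Φ y) x
        - γ * (ρ x)^(γ-1)
          * ⟪gradient (fun y => (1/(1-γ)) * (ρ y / μ y)^(1-γ)) x, gradient Φ x⟫_ℝ
      = (μ x)^(γ-1) * lapl n Φ x + γ * (μ x)^(γ-2) * ⟪gradient μ x, gradient Φ x⟫_ℝ := by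
  intro x
  have hρd : DifferentiableAt ℝ ρ x := hρ.differentiable (by simp) x
  have hμd : DifferentiableAt ℝ μ x := hμ.differentiable (by simp) x
  have hρp (p : ℝ) : DifferentiableAt ℝ (fun y => ρ y ^ p) x :=
    hρd.rpow_const (Or.inl (hρpos x).ne')
  have hμp (p : ℝ) : DifferentiableAt ℝ (fun y => μ y ^ p) x :=
    hμd.rpow_const (Or.inl (hμpos x).ne')
  have hratio : (fun y => (1/(1-γ)) * (ρ y / μ y)^(1-γ))
      = fun y => (1/(1-γ)) * ((ρ y)^(1-γ) * (μ y)^(γ-1)) := by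
    funext y
    rw [Real.div_rpow (hρpos y).le (hμpos y).le, div_eq_mul_inv (ρ y ^ _),
      ← Real.rpow_neg (hμpos y).le, neg_sub]
  rw [divg_smul_gradient (hρp γ) (hΦ.of_le (by norm_cast)), hratio,
    gradient_fun_const_mul _ ((hρp _).fun_mul (hμp _)), gradient_fun_mul (hρp _) (hμp _),
    gradient_fun_rpow_const _ hρd (hρpos x).ne', gradient_fun_rpow_const _ hμd (hμpos x).ne',
    gradient_fun_rpow_const _ hρd (hρpos x).ne']
  simp only [inner_add_left, real_inner_smul_left]
  exact rpow_first_variation_identity (hρpos x) (hμpos x) hγ _ _ _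

/-- pointwise cancellation identity (Claim 1 in the proof of
Proposition 10):
`μ^{γ−1}ρ^{−γ} ∇·(ρ^γ∇Φ) − γρ^{γ−1}⟨∇((1/(1−γ))(ρ/μ)^{1−γ}), ∇Φ⟩
  = μ^{γ−1}ΔΦ + γμ^{γ−2}⟨∇μ, ∇Φ⟩`. -/
theorem stmt13 (n : ℕ) (hn : 1 ≤ n) (γ : ℝ) (hγ : γ ≠ 1)
    (ρ μ : EuclideanSpace ℝ (Fin n) → ℝ)
    (hρ : ContDiff ℝ (⊤ : ℕ∞) ρ) (hμ : ContDiff ℝ (⊤ : ℕ∞) μ)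
    (hρpos : ∀ x, 0 < ρ x) (hμpos : ∀ x, 0 < μ x)
    (Φ : EuclideanSpace ℝ (Fin n) → ℝ) (hΦ : ContDiff ℝ (⊤ : ℕ∞) Φ) :
    ∀ x, (μ x)^(γ-1) * (ρ x)^(-γ) * divg n (fun y => (ρ y)^γ • gradient Φ y) x
        - γ * (ρ x)^(γ-1)
          * ⟪gradient (fun y => (1/(1-γ)) * (ρ y / μ y)^(1-γ)) x, gradient Φ x⟫_ℝ
      = (μ x)^(γ-1) * lapl n Φ x + γ * (μ x)^(γ-2) * ⟪gradient μ x, gradient Φ x⟫_ℝ :=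
  stmt13_general n γ hγ ρ μ hρ hμ hρpos hμpos Φ hΦ
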